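/- Let L(λ) := M_{τ_1}(Y_1) M_{σ_1}(X_1) (λ M_τ^P − M_σ^P) M_{σ_2}(X_2) M_{τ_2}(Y_2) be an EGFP of P(λ) with −m ∈ τ. Then: (a) if c_{−m}(τ) < m and i_{−m}(τ) < m, then (e^T_{c_{−m}(τ)+1} ⊗ I_n) M_{σ_2}(X_2) M_{τ_2}(Y_2) = e^T_{c_{−m}(τ,τ_2)+1} ⊗ I_n and M_{τ_1}(Y_1) M_{σ_1}(X_1) (e_{i_{−m}(τ)+1} ⊗ I_n) = e_{i_{−m}(τ_1,τ)+1} ⊗ I_n; (b) if c_{−m}(τ) = m then (e^T_m ⊗ I_n) M_{σ_2}(X_2) M_{τ_2}(Y_2) = e^T_m ⊗ I_n, and if i_{−m}(τ) = m then M_{τ_1}(Y_1) M_{σ_1}(X_1) (e_m ⊗ I_n) = e_m ⊗ I_n. -/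

import Mathlib

open Matrix Polynomial

/-- Signed indices: `pos k` denotes `k` and `neg k` denotes `−k`, with `−0` and `0` distinct. -/
inductive SIdx : Type where
  | pos : ℕ → SIdx
  | neg : ℕ → SIdx
deriving DecidableEq

namespace SIdx

/-- The absolute value of a signed index. -/
def val : SIdx → ℕ
  | pos k => k
  | neg k => k

/-- Whether a signed index is negative. -/
def isNeg : SIdx → Bool
  | pos _ => false
  | neg _ => true

/-- The successor `t + 1` of a signed index (`−s + 1 = −(s−1)`). -/
def succ : SIdx → SIdx
  | pos k => pos (k + 1)
  | neg 0 => pos 0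
  | neg (k + 1) => neg k

/-- Negation of a signed index. -/
def negate : SIdx → SIdx
  | pos k => neg k
  | neg k => pos k

end SIdx

/-- The ascending chain `(t, t+1, …, t+p)`. -/
def chainUp (t : SIdx) : ℕ → List SIdx
  | 0 => [t]
  | p + 1 => t :: chainUp t.succ p

/-- The number of consecutions `c_t(α)` of the index tuple `α` at `t` (`−1` when `t ∉ α`):
the largest `p` such that `(t, t+1, …, t+p)` is a subtuple (sublist) of `α`. -/
noncomputable def consAt (α : List SIdx) (t : SIdx) : ℤ :=
  letI := Classical.decPred (fun p : ℕ => (chainUp t p).Sublist α)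
  if t ∈ α then (Nat.findGreatest (fun p : ℕ => (chainUp t p).Sublist α) α.length : ℤ) else -1

/-- The number of inversions `i_t(α)` of the index tuple `α` at `t` (`−1` when `t ∉ α`):
the largest `q` such that `(t+q, …, t+1, t)` is a subtuple (sublist) of `α`. -/
noncomputable def invsAt (α : List SIdx) (t : SIdx) : ℤ :=
  letI := Classical.decPred (fun p : ℕ => ((chainUp t p).reverse).Sublist α)
  if t ∈ α then (Nat.findGreatest (fun p : ℕ => ((chainUp t p).reverse).Sublist α) α.length : ℤ)
  else -1

/-- The Successor Infix Property: between any two equal entries there is an occurrence of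
their successor. -/
def SIP (α : List SIdx) : Prop :=
  ∀ a b : Fin α.length, a < b → α.get a = α.get b →
    ∃ c : Fin α.length, a < c ∧ c < b ∧ α.get c = (α.get a).succ

/-- The `mn × mn` elementary matrix `M_k(X)` (viewed as an `m × m` block matrix with
`n × n` blocks): `M_0(X) = M_{−0}(X) = diag(I_{(m−1)n}, X)`,
`M_m(X) = M_{−m}(X) = diag(X, I_{(m−1)n})`, and for `1 ≤ i ≤ m−1` the matrix `M_i(X)`
(resp. `M_{−i}(X)`) is the identity except for the 2×2 block submatrix
`[[X, I],[I, 0]]` (resp. `[[0, I],[I, X]]`) in block rows/columns `(m−i, m−i+1)`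
(1-indexed). -/
noncomputable def elemMat (m n : ℕ) (k : SIdx) (X : Matrix (Fin n) (Fin n) ℂ) :
    Matrix (Fin m × Fin n) (Fin m × Fin n) ℂ := fun p q =>
  if k.val = 0 then
    if p.1 = q.1 then (if (p.1 : ℕ) = m - 1 then X p.2 q.2 else if p.2 = q.2 then 1 else 0)
    else 0
  else if k.val = m then
    if p.1 = q.1 then (if (p.1 : ℕ) = 0 then X p.2 q.2 else if p.2 = q.2 then 1 else 0)
    else 0
  else
    if (p.1 : ℕ) = m - k.val - 1 ∧ (q.1 : ℕ) = m - k.val - 1 then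
      (if k.isNeg then 0 else X p.2 q.2)
    else if ((p.1 : ℕ) = m - k.val - 1 ∧ (q.1 : ℕ) = m - k.val) ∨
        ((p.1 : ℕ) = m - k.val ∧ (q.1 : ℕ) = m - k.val - 1) then
      (if p.2 = q.2 then 1 else 0)
    else if (p.1 : ℕ) = m - k.val ∧ (q.1 : ℕ) = m - k.val then
      (if k.isNeg then X p.2 q.2 else 0)
    else if p = q then 1 else 0

/-- `M_t(X) = M_{t_1}(X_1) ⋯ M_{t_r}(X_r)` for an index tuple `t` with matrix assignment `Xs`. -/
noncomputable def prodAssign (m n : ℕ) (t : List SIdx) (Xs : List (Matrix (Fin n) (Fin n) ℂ)) :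
    Matrix (Fin m × Fin n) (Fin m × Fin n) ℂ :=
  ((t.zip Xs).map fun p => elemMat m n p.1 p.2).prod

/-- The trivial (Fiedler) matrix assignment of `P(λ) = Σ λ^i A_i`:
`M_i^P = M_i(−A_i)` for `0 ≤ i ≤ m−1`, `M_m^P = (M_{−m}^P)⁻¹ = M_m(A_m⁻¹)`,
`M_{−i}^P = M_{−i}(A_i)` for `1 ≤ i ≤ m`, and `M_{−0}^P = (M_0^P)⁻¹ = M_{−0}((−A_0)⁻¹)`. -/
noncomputable def fiedlerX (m : ℕ) {n : ℕ} (A : ℕ → Matrix (Fin n) (Fin n) ℂ) :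
    SIdx → Matrix (Fin n) (Fin n) ℂ
  | .pos i => if i = m then (A m)⁻¹ else -A i
  | .neg i => if i = 0 then (-A 0)⁻¹ else A i

/-- `M_t^P`, the product of Fiedler matrices of `P` along the index tuple `t`. -/
noncomputable def prodFiedler (m n : ℕ) (A : ℕ → Matrix (Fin n) (Fin n) ℂ) (t : List SIdx) :
    Matrix (Fin m × Fin n) (Fin m × Fin n) ℂ :=
  (t.map fun k => elemMat m n k (fiedlerX m A k)).prod

/-- A nonsingular matrix assignment: the matrices assigned to positions with indices
`±0` or `±m` are nonsingular. -/
def NonsingAssign (m : ℕ) {n : ℕ} (t : List SIdx) (Xs : List (Matrix (Fin n) (Fin n) ℂ)) :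
    Prop :=
  t.length = Xs.length ∧ ∀ p ∈ t.zip Xs, (p.1.val = 0 ∨ p.1.val = m) → IsUnit p.2

/-- The data of an extended generalized Fiedler pencil (EGFP)
`L(λ) = M_{τ₁}(Y₁) M_{σ₁}(X₁) (λ M_τ^P − M_σ^P) M_{σ₂}(X₂) M_{τ₂}(Y₂)`
of the `n × n` matrix polynomial `P(λ) = Σ_{i=0}^m λ^i A_i` of degree `m ≥ 2`. -/
structure EGFPData (m n : ℕ) where
  /-- coefficients of `P` -/
  A : ℕ → Matrix (Fin n) (Fin n) ℂ
  sig : List SIdx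
  tau : List SIdx
  sig1 : List SIdx
  sig2 : List SIdx
  tau1 : List SIdx
  tau2 : List SIdx
  X1 : List (Matrix (Fin n) (Fin n) ℂ)
  X2 : List (Matrix (Fin n) (Fin n) ℂ)
  Y1 : List (Matrix (Fin n) (Fin n) ℂ)
  Y2 : List (Matrix (Fin n) (Fin n) ℂ)
  hm : 2 ≤ m
  hAm : A m ≠ 0
  hsigpos : ∀ k ∈ sig, k.isNeg = false
  htauneg : ∀ k ∈ tau, k.isNeg = true
  /-- `(σ, ω)` is a permutation of `{0, 1, …, m}`, where `τ = −ω`. -/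
  hperm : List.Perm (sig.map SIdx.val ++ tau.map SIdx.val) (List.range (m + 1))
  hsig1 : ∀ k ∈ sig1, k ∈ sig ∧ k.val + 2 ≤ m
  hsig2 : ∀ k ∈ sig2, k ∈ sig ∧ k.val + 2 ≤ m
  htau1 : ∀ k ∈ tau1, k ∈ tau ∧ 2 ≤ k.val
  htau2 : ∀ k ∈ tau2, k ∈ tau ∧ 2 ≤ k.val
  hSIPsig : SIP (sig1 ++ sig ++ sig2)
  hSIPtau : SIP (tau1 ++ tau ++ tau2)
  hX1 : NonsingAssign m sig1 X1
  hX2 : NonsingAssign m sig2 X2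
  hY1 : NonsingAssign m tau1 Y1
  hY2 : NonsingAssign m tau2 Y2
  hA0 : SIdx.neg 0 ∈ tau → IsUnit (A 0)
  hAmUnit : SIdx.pos m ∈ sig → IsUnit (A m)

namespace EGFPData

variable {m n : ℕ}

/-- `M_{τ₁}(Y₁) M_{σ₁}(X₁)`. -/
noncomputable def leftFac (E : EGFPData m n) : Matrix (Fin m × Fin n) (Fin m × Fin n) ℂ :=
  prodAssign m n E.tau1 E.Y1 * prodAssign m n E.sig1 E.X1

/-- `M_{σ₂}(X₂) M_{τ₂}(Y₂)`. -/
noncomputable def rightFac (E : EGFPData m n) : Matrix (Fin m × Fin n) (Fin m × Fin n) ℂ :=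
  prodAssign m n E.sig2 E.X2 * prodAssign m n E.tau2 E.Y2

/-- The coefficient `L₁` of `λ` in `L(λ) = λ L₁ − L₀`. -/
noncomputable def L1 (E : EGFPData m n) : Matrix (Fin m × Fin n) (Fin m × Fin n) ℂ :=
  E.leftFac * prodFiedler m n E.A E.tau * E.rightFac

/-- The constant term `L₀` in `L(λ) = λ L₁ − L₀`. -/
noncomputable def L0 (E : EGFPData m n) : Matrix (Fin m × Fin n) (Fin m × Fin n) ℂ :=
  E.leftFac * prodFiedler m n E.A E.sig * E.rightFac

end EGFPData

/-- The `(i, j)` block (of size `n × n`) of an `mn × mn` matrix. -/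
def blockOf {m n : ℕ} (M : Matrix (Fin m × Fin n) (Fin m × Fin n) ℂ) (i j : Fin m) :
    Matrix (Fin n) (Fin n) ℂ := fun p q => M (i, p) (j, q)

/-- Block penta-diagonal: all blocks `B_{ij}` with `|i − j| > 2` vanish. -/
def BlockPenta {m n : ℕ} (M : Matrix (Fin m × Fin n) (Fin m × Fin n) ℂ) : Prop :=
  ∀ i j : Fin m, ((i : ℕ) + 2 < (j : ℕ) ∨ (j : ℕ) + 2 < (i : ℕ)) → blockOf M i j = 0

/-- Block tridiagonal: all blocks `B_{ij}` with `|i − j| > 1` vanish. -/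
def BlockTri {m n : ℕ} (M : Matrix (Fin m × Fin n) (Fin m × Fin n) ℂ) : Prop :=
  ∀ i j : Fin m, ((i : ℕ) + 1 < (j : ℕ) ∨ (j : ℕ) + 1 < (i : ℕ)) → blockOf M i j = 0

/-- `e_j^T ⊗ I_n` as an `n × mn` matrix, for a 1-indexed block index `j`
(zero when `j` is out of range). -/
def rowSel (m n : ℕ) (j : ℤ) : Matrix (Fin n) (Fin m × Fin n) ℂ :=
  fun p q => if ((q.1 : ℕ) : ℤ) + 1 = j ∧ p = q.2 then 1 else 0

/-- `e_j ⊗ I_n` as an `mn × n` matrix, for a 1-indexed block index `j`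
(zero when `j` is out of range). -/
def colSel (m n : ℕ) (j : ℤ) : Matrix (Fin m × Fin n) (Fin n) ℂ :=
  fun p q => if ((p.1 : ℕ) : ℤ) + 1 = j ∧ p.2 = q then 1 else 0

/-- The matrix polynomial `P(λ) = Σ_{i=0}^m λ^i A_i` as an `n × n` matrix over `ℂ[λ]`. -/
noncomputable def polyP (m n : ℕ) (A : ℕ → Matrix (Fin n) (Fin n) ℂ) :
    Matrix (Fin n) (Fin n) (Polynomial ℂ) := fun p q =>
  ∑ i ∈ Finset.range (m + 1), Polynomial.C (A i p q) * Polynomial.X ^ i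


-- ===================== auxiliary development =====================
namespace Stmt18
open List

def iterSucc (t : SIdx) (p : ℕ) : SIdx := SIdx.succ^[p] t

lemma iterSucc_succ' (t : SIdx) (p : ℕ) : iterSucc t (p+1) = (iterSucc t p).succ :=
  Function.iterate_succ_apply' _ _ _

lemma iterSucc_neg {m : ℕ} : ∀ {j : ℕ}, j ≤ m → iterSucc (SIdx.neg m) j = SIdx.neg (m - j) := by
  intro j
  induction j with
  | zero => intro _; simp [iterSucc]
  | succ i ih =>
    intro h
    rw [iterSucc_succ', ih (Nat.le_of_succ_le h)]
    have h2 : m - i = (m - (i+1)) + 1 := by omega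
    rw [h2]; rfl

lemma chainUp_succ (t : SIdx) (p : ℕ) : chainUp t (p+1) = chainUp t p ++ [iterSucc t (p+1)] := by
  induction p generalizing t with
  | zero => rfl
  | succ p ih =>
    show t :: chainUp t.succ (p+1) = (t :: chainUp t.succ p) ++ _
    rw [ih t.succ]
    simp [iterSucc, Function.iterate_succ_apply]

lemma chainUp_length (t : SIdx) (p : ℕ) : (chainUp t p).length = p + 1 := by
  induction p generalizing t with
  | zero => rfl
  | succ p ih => simpa [chainUp] using ih t.succ

lemma chainUp_sublist {t : SIdx} {p q : ℕ} (h : p ≤ q) : chainUp t p <+ chainUp t q := by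
  induction q with
  | zero => simpa [Nat.le_zero.mp h] using Sublist.refl _
  | succ q ih =>
    rcases Nat.lt_or_ge p (q+1) with h' | h'
    · exact (ih (by omega)).trans (by rw [chainUp_succ]; exact sublist_append_left _ _)
    · have : p = q + 1 := by omega
      subst this; exact Sublist.refl _

lemma iterSucc_mem_chainUp {t : SIdx} {j p : ℕ} (h : j ≤ p) : iterSucc t j ∈ chainUp t p := by
  induction p with
  | zero => simp [Nat.le_zero.mp h, iterSucc, chainUp]
  | succ p ih =>
    rw [chainUp_succ]
    rcases Nat.lt_or_ge j (p+1) with h' | h'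
    · exact mem_append_left _ (ih (by omega))
    · have : j = p + 1 := by omega
      subst this; simp

lemma cons_sublist_cases {α : Type*} {a b : α} {l L : List α} (h : a :: l <+ b :: L) :
    a :: l <+ L ∨ (a = b ∧ l <+ L) := by
  cases h with
  | cons _ h => exact Or.inl h
  | cons_cons _ h => exact Or.inr ⟨rfl, h⟩

lemma cons_sublist_split {α : Type*} {a : α} {l L : List α} (h : a :: l <+ L) :
    ∃ L₁ L₂, L = L₁ ++ a :: L₂ ∧ l <+ L₂ := by
  induction L with
  | nil => exact absurd h (by simp)
  | cons b L ih =>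
    rcases cons_sublist_cases h with h' | ⟨rfl, h'⟩
    · obtain ⟨L₁, L₂, rfl, hl⟩ := ih h'
      exact ⟨b :: L₁, L₂, rfl, hl⟩
    · exact ⟨[], L, rfl, h'⟩

lemma snoc_sublist_split {α : Type*} {a : α} {l L : List α} (h : l ++ [a] <+ L) :
    ∃ L₁ L₂, L = L₁ ++ a :: L₂ ∧ l <+ L₁ := by
  have h' : a :: l.reverse <+ L.reverse := by simpa using h.reverse
  obtain ⟨M₁, M₂, hM, hl⟩ := cons_sublist_split h'
  refine ⟨M₂.reverse, M₁.reverse, ?_, by simpa using hl.reverse⟩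
  have := congrArg List.reverse hM
  simpa using this

lemma snoc_sublist_cases {α : Type*} {a x : α} {l L : List α} (h : l ++ [a] <+ L ++ [x]) :
    l ++ [a] <+ L ∨ (a = x ∧ l <+ L) := by
  have h' : a :: l.reverse <+ x :: L.reverse := by simpa using h.reverse
  rcases cons_sublist_cases h' with h2 | ⟨rfl, h2⟩
  · left; simpa using h2.reverse
  · right; exact ⟨rfl, by simpa using h2.reverse⟩

-- ================ cA ===================

def cA (t : SIdx) (α : List SIdx) : ℕ :=
  Nat.findGreatest (fun p : ℕ => (chainUp t p).Sublist α) α.length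

def iA (t : SIdx) (α : List SIdx) : ℕ :=
  Nat.findGreatest (fun p : ℕ => ((chainUp t p).reverse).Sublist α) α.length

lemma fg_congr {P : ℕ → Prop} {b : ℕ} (i1 i2 : DecidablePred P) :
    @Nat.findGreatest P i1 b = @Nat.findGreatest P i2 b := by
  rw [Subsingleton.elim i1 i2]

lemma cA_eq {t : SIdx} {α : List SIdx} {r : ℕ} (hP : chainUp t r <+ α)
    (hnP : ¬ chainUp t (r+1) <+ α) : cA t α = r := by
  classical
  rw [cA, Nat.findGreatest_eq_iff]
  have hlen : r + 1 ≤ α.length := by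
    have := hP.length_le; rwa [chainUp_length] at this
  exact ⟨by omega, fun _ => hP, fun k hk _ hPk => hnP ((chainUp_sublist (by omega)).trans hPk)⟩

lemma cA_spec {t : SIdx} {α : List SIdx} (h : t ∈ α) :
    chainUp t (cA t α) <+ α ∧ ¬ chainUp t (cA t α + 1) <+ α := by
  classical
  have h0 : chainUp t 0 <+ α := by simpa [chainUp] using h
  constructor
  · exact Nat.findGreatest_spec (P := fun p : ℕ => chainUp t p <+ α) (m := 0)
      (Nat.zero_le _) h0
  · intro hP
    have hlen : cA t α + 1 ≤ α.length := by
      have := hP.length_le; rw [chainUp_length] at this; omega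
    exact Nat.findGreatest_is_greatest (P := fun p : ℕ => chainUp t p <+ α)
      (Nat.lt_succ_self _) hlen hP

lemma cA_snoc_extend {t : SIdx} {α : List SIdx} {x : SIdx} (h : t ∈ α)
    (hx : x = iterSucc t (cA t α + 1)) : cA t (α ++ [x]) = cA t α + 1 := by
  obtain ⟨h1, h2⟩ := cA_spec h
  apply cA_eq
  · rw [chainUp_succ, hx]
    exact h1.append (Sublist.refl _)
  · rw [chainUp_succ]
    intro hc
    rcases snoc_sublist_cases hc with hc | ⟨_, hc⟩
    · exact h2 ((sublist_append_left _ [iterSucc t (cA t α + 1 + 1)]).trans hc)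
    · exact h2 hc

lemma cA_snoc_noextend {t : SIdx} {α : List SIdx} {x : SIdx} (h : t ∈ α)
    (hx : x ≠ iterSucc t (cA t α + 1)) : cA t (α ++ [x]) = cA t α := by
  obtain ⟨h1, h2⟩ := cA_spec h
  apply cA_eq
  · exact h1.trans (sublist_append_left _ _)
  · rw [chainUp_succ]
    intro hc
    rcases snoc_sublist_cases hc with hc | ⟨heq, hc⟩
    · rw [← chainUp_succ] at hc; exact h2 hc
    · exact hx heq.symm

-- reverse-chain versions
lemma revChain_succ (t : SIdx) (p : ℕ) :
    (chainUp t (p+1)).reverse = iterSucc t (p+1) :: (chainUp t p).reverse := by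
  rw [chainUp_succ]; simp

lemma iA_eq {t : SIdx} {α : List SIdx} {r : ℕ} (hP : (chainUp t r).reverse <+ α)
    (hnP : ¬ (chainUp t (r+1)).reverse <+ α) : iA t α = r := by
  classical
  rw [iA, Nat.findGreatest_eq_iff]
  have hlen : r + 1 ≤ α.length := by
    have := hP.length_le; rwa [length_reverse, chainUp_length] at this
  exact ⟨by omega, fun _ => hP,
    fun k hk _ hPk => hnP (((chainUp_sublist (by omega)).reverse).trans hPk)⟩

lemma iA_spec {t : SIdx} {α : List SIdx} (h : t ∈ α) :
    (chainUp t (iA t α)).reverse <+ α ∧ ¬ (chainUp t (iA t α + 1)).reverse <+ α := by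
  classical
  have h0 : (chainUp t 0).reverse <+ α := by simpa [chainUp] using h
  constructor
  · exact Nat.findGreatest_spec (P := fun p : ℕ => (chainUp t p).reverse <+ α) (m := 0)
      (Nat.zero_le _) h0
  · intro hP
    have hlen : iA t α + 1 ≤ α.length := by
      have := hP.length_le; rw [length_reverse, chainUp_length] at this; omega
    exact Nat.findGreatest_is_greatest (P := fun p : ℕ => (chainUp t p).reverse <+ α)
      (Nat.lt_succ_self _) hlen hP

lemma iA_cons_extend {t : SIdx} {α : List SIdx} {x : SIdx} (h : t ∈ α)
    (hx : x = iterSucc t (iA t α + 1)) : iA t (x :: α) = iA t α + 1 := by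
  obtain ⟨h1, h2⟩ := iA_spec h
  apply iA_eq
  · rw [revChain_succ, hx]
    exact h1.cons₂ _
  · rw [revChain_succ]
    intro hc
    rcases cons_sublist_cases hc with hc | ⟨_, hc⟩
    · rw [← revChain_succ] at hc
      exact h2 (((chainUp_sublist (Nat.le_succ _)).reverse).trans hc)
    · exact h2 hc

lemma iA_cons_noextend {t : SIdx} {α : List SIdx} {x : SIdx} (h : t ∈ α)
    (hx : x ≠ iterSucc t (iA t α + 1)) : iA t (x :: α) = iA t α := by
  obtain ⟨h1, h2⟩ := iA_spec h
  apply iA_eq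
  · exact h1.cons _
  · rw [revChain_succ]
    intro hc
    rcases cons_sublist_cases hc with hc | ⟨heq, hc⟩
    · rw [← revChain_succ] at hc; exact h2 hc
    · exact hx heq.symm

lemma getElem_cons_of_pos {α : Type*} (a : α) (l : List α) {i : ℕ} (h : i < (a::l).length)
    (h0 : 0 < i) : (a :: l)[i] = l[i-1]'(by simp at h; omega) := by
  obtain ⟨j, rfl⟩ : ∃ j, i = j + 1 := ⟨i-1, by omega⟩
  simp

lemma sip_between {A B C : List SIdx} {s : SIdx} (h : SIP (A ++ s :: (B ++ s :: C))) :
    s.succ ∈ B := by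
  set M := A ++ s :: (B ++ s :: C) with hM
  have hlen : M.length = A.length + B.length + C.length + 2 := by
    simp [hM]; omega
  have ha : A.length < M.length := by omega
  have hb : A.length + B.length + 1 < M.length := by omega
  have hgeta : M.get ⟨A.length, ha⟩ = s := by
    simp only [hM, List.get_eq_getElem]
    rw [List.getElem_append_right (le_refl _)]
    simp
  have hgetb : M.get ⟨A.length + B.length + 1, hb⟩ = s := by
    simp only [hM, List.get_eq_getElem]
    rw [List.getElem_append_right (by omega)]
    have h2 : A.length + B.length + 1 - A.length = B.length + 1 := by omega
    simp only [h2, List.getElem_cons_succ]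
    rw [List.getElem_append_right (le_refl _)]
    simp
  obtain ⟨c, hac, hcb, hgc⟩ := h ⟨A.length, ha⟩ ⟨A.length + B.length + 1, hb⟩
    (by simp only [Fin.mk_lt_mk]; omega) (by rw [hgeta, hgetb])
  rw [hgeta] at hgc
  have hc1 : A.length < (c : ℕ) := hac
  have hc2 : (c : ℕ) < A.length + B.length + 1 := hcb
  have hkey : M.get c = B[(c : ℕ) - A.length - 1]'(by omega) := by
    simp only [hM, List.get_eq_getElem]
    rw [List.getElem_append_right (by omega)]
    rw [getElem_cons_of_pos _ _ _ (by omega)]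
    rw [List.getElem_append_left (by omega)]
  rw [hkey] at hgc
  rw [← hgc]
  exact List.getElem_mem _

lemma sip_tail {x : SIdx} {l : List SIdx} (h : SIP (x :: l)) : SIP l := by
  intro a b hab heq
  have h1 : (a:ℕ)+1 < (x::l).length := by simp
  have h2 : (b:ℕ)+1 < (x::l).length := by simp
  have hab' : (a:ℕ) < (b:ℕ) := hab
  obtain ⟨c, hac, hcb, hgc⟩ := h ⟨(a:ℕ)+1, h1⟩ ⟨(b:ℕ)+1, h2⟩
    (by simp only [Fin.mk_lt_mk]; omega) (by simpa using heq)
  have hac' : (a:ℕ)+1 < (c:ℕ) := hac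
  have hcb' : (c:ℕ) < (b:ℕ)+1 := hcb
  have hcl : (c:ℕ) - 1 < l.length := by have := c.isLt; simp at this; omega
  refine ⟨⟨(c:ℕ) - 1, hcl⟩, by simp only [Fin.lt_def]; omega, by simp only [Fin.lt_def]; omega, ?_⟩
  have h3 : (x :: l).get c = l.get ⟨(c:ℕ)-1, hcl⟩ := by
    simp only [List.get_eq_getElem]
    exact getElem_cons_of_pos _ _ _ (by omega)
  have h5 : (x :: l).get ⟨(a:ℕ)+1, h1⟩ = l.get a := by simp
  rw [← h3, hgc, h5]


variable {m n : ℕ}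

lemma rowSel_mul_apply (r : Fin m) (M : Matrix (Fin m × Fin n) (Fin m × Fin n) ℂ)
    (p : Fin n) (q : Fin m × Fin n) :
    (rowSel m n (((r:ℕ):ℤ)+1) * M) p q = M (r, p) q := by
  rw [Matrix.mul_apply]
  rw [Finset.sum_eq_single (r, p)]
  · simp [rowSel]
  · rintro ⟨b1, b2⟩ _ hb
    simp only [rowSel]
    rw [if_neg, zero_mul]
    rintro ⟨hb1, hb2⟩
    apply hb
    have h1 : b1 = r := Fin.ext (by omega)
    subst h1
    rw [hb2]
  · intro h; exact absurd (Finset.mem_univ _) h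

lemma mul_colSel_apply (r : Fin m) (M : Matrix (Fin m × Fin n) (Fin m × Fin n) ℂ)
    (p : Fin m × Fin n) (q : Fin n) :
    (M * colSel m n (((r:ℕ):ℤ)+1)) p q = M p (r, q) := by
  rw [Matrix.mul_apply]
  rw [Finset.sum_eq_single (r, q)]
  · simp [colSel]
  · rintro ⟨b1, b2⟩ _ hb
    simp only [colSel]
    rw [if_neg, mul_zero]
    rintro ⟨hb1, hb2⟩
    apply hb
    have h1 : b1 = r := Fin.ext (by omega)
    subst h1
    rw [hb2]
  · intro h; exact absurd (Finset.mem_univ _) h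

lemma rowSel_elemMat_neutral (k : SIdx) (X : Matrix (Fin n) (Fin n) ℂ) (r : Fin m)
    (h1 : (r:ℕ) ≠ m - k.val - 1) (h2 : (r:ℕ) ≠ m - k.val) :
    rowSel m n (((r:ℕ):ℤ)+1) * elemMat m n k X = rowSel m n (((r:ℕ):ℤ)+1) := by
  ext p q
  rw [rowSel_mul_apply]
  rcases q with ⟨q1, q2⟩
  have hr := r.isLt
  have hq := q1.isLt
  simp only [elemMat, rowSel]
  split_ifs <;>
    first
      | rfl
      | (exfalso; omega)
      | (simp_all only [Prod.mk.injEq, not_and, not_true]; done)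
      | (exfalso; casesm* _ ∧ _ <;>
          simp_all only [Fin.ext_iff, Prod.mk.injEq, not_and, not_true, false_implies,
            true_implies] <;> omega)
      | (exfalso; simp_all [Prod.ext_iff, Fin.ext_iff]; omega)
      | (exfalso; simp_all [Prod.ext_iff, Fin.ext_iff])
      | (simp_all [Prod.ext_iff, Fin.ext_iff, eq_comm]; done)
      | (exfalso; simp_all only [not_true, true_implies, false_implies, imp_false, not_and,
          not_or, Prod.mk.injEq, Fin.ext_iff]; omega)

lemma rowSel_elemMat_move (v : ℕ) (X : Matrix (Fin n) (Fin n) ℂ) (r : Fin m)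
    (hv1 : 1 ≤ v) (hv2 : v ≤ m - 1) (hm : 1 ≤ m) (hr : (r:ℕ) = m - v - 1) :
    rowSel m n (((r:ℕ):ℤ)+1) * elemMat m n (SIdx.neg v) X = rowSel m n (((r:ℕ):ℤ)+2) := by
  ext p q
  rw [rowSel_mul_apply]
  rcases q with ⟨q1, q2⟩
  have hr2 := r.isLt
  have hq := q1.isLt
  simp only [elemMat, rowSel, SIdx.val, SIdx.isNeg]
  split_ifs <;>
    first
      | rfl
      | (exfalso; omega)
      | (simp_all only [Prod.mk.injEq, not_and, not_true]; done)
      | (exfalso; casesm* _ ∧ _ <;>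
          simp_all only [Fin.ext_iff, Prod.mk.injEq, not_and, not_true, false_implies,
            true_implies] <;> omega)
      | (exfalso; simp_all [Prod.ext_iff, Fin.ext_iff]; omega)
      | (exfalso; simp_all [Prod.ext_iff, Fin.ext_iff])
      | (simp_all [Prod.ext_iff, Fin.ext_iff, eq_comm]; done)
      | (exfalso; simp_all only [not_true, true_implies, false_implies, imp_false, not_and,
          not_or, Prod.mk.injEq, Fin.ext_iff]; omega)

lemma elemMat_transpose (k : SIdx) (X : Matrix (Fin n) (Fin n) ℂ) :
    (elemMat m n k X)ᵀ = elemMat m n k Xᵀ := by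
  ext p q
  rcases p with ⟨p1, p2⟩
  rcases q with ⟨q1, q2⟩
  simp only [Matrix.transpose_apply, elemMat]
  split_ifs <;>
    first
      | rfl
      | (exfalso; omega)
      | (simp_all only [Prod.mk.injEq, not_and, not_true]; done)
      | (exfalso; casesm* _ ∧ _ <;>
          simp_all only [Fin.ext_iff, Prod.mk.injEq, not_and, not_true, false_implies,
            true_implies] <;> omega)
      | (exfalso; simp_all [Prod.ext_iff, Fin.ext_iff]; omega)
      | (exfalso; simp_all [Prod.ext_iff, Fin.ext_iff])
      | (simp_all [Prod.ext_iff, Fin.ext_iff, eq_comm]; done)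
      | (exfalso; simp_all only [not_true, true_implies, false_implies, imp_false, not_and,
          not_or, Prod.mk.injEq, Fin.ext_iff]; omega)

lemma rowSel_transpose (j : ℤ) : (rowSel m n j)ᵀ = colSel m n j := by
  ext p q
  simp only [Matrix.transpose_apply, rowSel, colSel]
  split_ifs <;> first | rfl | (simp_all [eq_comm]) | (exfalso; simp_all [eq_comm])

lemma elemMat_colSel_neutral (k : SIdx) (X : Matrix (Fin n) (Fin n) ℂ) (r : Fin m)
    (h1 : (r:ℕ) ≠ m - k.val - 1) (h2 : (r:ℕ) ≠ m - k.val) :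
    elemMat m n k X * colSel m n (((r:ℕ):ℤ)+1) = colSel m n (((r:ℕ):ℤ)+1) := by
  have h := rowSel_elemMat_neutral (m := m) (n := n) k Xᵀ r h1 h2
  have := congrArg Matrix.transpose h
  rwa [Matrix.transpose_mul, elemMat_transpose, Matrix.transpose_transpose,
    rowSel_transpose] at this

lemma elemMat_colSel_move (v : ℕ) (X : Matrix (Fin n) (Fin n) ℂ) (r : Fin m)
    (hv1 : 1 ≤ v) (hv2 : v ≤ m - 1) (hm : 1 ≤ m) (hr : (r:ℕ) = m - v - 1) :
    elemMat m n (SIdx.neg v) X * colSel m n (((r:ℕ):ℤ)+1) = colSel m n (((r:ℕ):ℤ)+2) := by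
  have h := rowSel_elemMat_move (m := m) (n := n) v Xᵀ r hv1 hv2 hm hr
  have := congrArg Matrix.transpose h
  rwa [Matrix.transpose_mul, elemMat_transpose, Matrix.transpose_transpose,
    rowSel_transpose, rowSel_transpose] at this

-- ============ prodAssign basics ============

lemma prodAssign_nil (Xs : List (Matrix (Fin n) (Fin n) ℂ)) :
    prodAssign m n [] Xs = 1 := by
  simp [prodAssign]

lemma prodAssign_cons (k : SIdx) (l : List SIdx) (X : Matrix (Fin n) (Fin n) ℂ)
    (Xs : List (Matrix (Fin n) (Fin n) ℂ)) :
    prodAssign m n (k :: l) (X :: Xs) = elemMat m n k X * prodAssign m n l Xs := by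
  simp [prodAssign]

-- ============ phase lemmas ============

/-- Neutral phase for rows. -/
lemma rowSel_prod_neutral (r : Fin m) :
    ∀ (l : List SIdx) (Xs : List (Matrix (Fin n) (Fin n) ℂ)),
    (∀ k ∈ l, (r:ℕ) ≠ m - k.val - 1 ∧ (r:ℕ) ≠ m - k.val) →
    rowSel m n (((r:ℕ):ℤ)+1) * prodAssign m n l Xs = rowSel m n (((r:ℕ):ℤ)+1) := by
  intro l
  induction l with
  | nil => intro Xs _; rw [prodAssign_nil, Matrix.mul_one]
  | cons k l ih =>
    intro Xs hcond
    rcases Xs with _ | ⟨X, Xs⟩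
    · simp [prodAssign]
    · rw [prodAssign_cons, ← Matrix.mul_assoc,
        rowSel_elemMat_neutral k X r (hcond k (by simp)).1 (hcond k (by simp)).2]
      exact ih Xs (fun k hk => hcond k (by simp [hk]))

/-- Neutral phase for columns. -/
lemma prod_colSel_neutral (r : Fin m) :
    ∀ (l : List SIdx) (Xs : List (Matrix (Fin n) (Fin n) ℂ)),
    (∀ k ∈ l, (r:ℕ) ≠ m - k.val - 1 ∧ (r:ℕ) ≠ m - k.val) →
    prodAssign m n l Xs * colSel m n (((r:ℕ):ℤ)+1) = colSel m n (((r:ℕ):ℤ)+1) := by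
  intro l
  induction l with
  | nil => intro Xs _; rw [prodAssign_nil, Matrix.one_mul]
  | cons k l ih =>
    intro Xs hcond
    rcases Xs with _ | ⟨X, Xs⟩
    · simp [prodAssign]
    · rw [prodAssign_cons, Matrix.mul_assoc, ih Xs (fun k hk => hcond k (by simp [hk])),
        elemMat_colSel_neutral k X r (hcond k (by simp)).1 (hcond k (by simp)).2]

/-- Active phase for rows (multiplication by `M_{τ₂}(Y₂)` on the right). -/
lemma rowSel_prod_tau (hm : 2 ≤ m) (u : List SIdx) :
    ∀ (l : List SIdx) (Ys : List (Matrix (Fin n) (Fin n) ℂ)) (L : List SIdx),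
    l.length = Ys.length →
    (∀ k ∈ l, k.isNeg = true ∧ 2 ≤ k.val ∧ k.val ≤ m) →
    SIP (u ++ L ++ l) → SIdx.neg m ∈ L → cA (SIdx.neg m) L < m →
    (rowSel m n ((cA (SIdx.neg m) L : ℤ)+1) * prodAssign m n l Ys =
      rowSel m n ((cA (SIdx.neg m) (L ++ l) : ℤ)+1)) ∧ cA (SIdx.neg m) (L ++ l) < m := by
  intro l
  induction l with
  | nil =>
    intro Ys L _ _ _ _ hlt
    rw [prodAssign_nil, Matrix.mul_one, List.append_nil]
    exact ⟨rfl, hlt⟩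
  | cons k l ih =>
    rintro Ys L hlen hcond hSIP hmem hlt
    rcases Ys with _ | ⟨Y, Ys⟩
    · exact absurd hlen (by simp)
    obtain ⟨hneg, hval2, hvalm⟩ := hcond k (by simp)
    obtain ⟨v, rfl⟩ : ∃ v, k = SIdx.neg v := by
      cases k with
      | pos j => simp [SIdx.isNeg] at hneg
      | neg j => exact ⟨j, rfl⟩
    simp only [SIdx.val] at hval2 hvalm
    obtain ⟨r, hrdef⟩ : ∃ r', cA (SIdx.neg m) L = r' := ⟨_, rfl⟩
    rw [hrdef] at hlt ⊢
    have hSIP' : SIP (u ++ (L ++ [SIdx.neg v]) ++ l) := by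
      have heq : u ++ (L ++ [SIdx.neg v]) ++ l = u ++ L ++ (SIdx.neg v :: l) := by simp
      rwa [heq]
    have hlen' : l.length = Ys.length := by simpa using hlen
    have hcond' : ∀ k' ∈ l, k'.isNeg = true ∧ 2 ≤ k'.val ∧ k'.val ≤ m :=
      fun k' hk => hcond k' (by simp [hk])
    have hmem' : SIdx.neg m ∈ L ++ [SIdx.neg v] := List.mem_append_left _ hmem
    have hsp := cA_spec (t := SIdx.neg m) hmem
    rw [hrdef] at hsp
    by_cases hext : SIdx.neg v = iterSucc (SIdx.neg m) (r + 1)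
    · -- extension case
      have hvv : v = m - r - 1 := by
        rw [iterSucc_neg (by omega : r + 1 ≤ m)] at hext
        simp at hext; omega
      have hca : cA (SIdx.neg m) (L ++ [SIdx.neg v]) = r + 1 := by
        rw [cA_snoc_extend hmem (by rw [hrdef]; exact hext), hrdef]
      obtain ⟨ih1, ih2⟩ := ih Ys (L ++ [SIdx.neg v]) hlen' hcond' hSIP' hmem'
        (by rw [hca]; omega)
      rw [hca] at ih1
      have hassoc : (L ++ [SIdx.neg v]) ++ l = L ++ SIdx.neg v :: l := by simp
      rw [hassoc] at ih1 ih2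
      have hmove := rowSel_elemMat_move (m := m) (n := n) v Y ⟨r, hlt⟩ (by omega) (by omega)
        (by omega) (by show r = m - v - 1; omega)
      have hmove' : rowSel m n ((r:ℤ)+1) * elemMat m n (SIdx.neg v) Y =
          rowSel m n ((r:ℤ)+2) := hmove
      constructor
      · rw [prodAssign_cons, ← Matrix.mul_assoc, hmove']
        have hcast : ((r:ℤ)+2) = (((r+1:ℕ):ℤ)+1) := by push_cast; ring
        rw [hcast]
        exact ih1
      · exact ih2
    · by_cases hbad : SIdx.neg v = iterSucc (SIdx.neg m) r
      · -- contradiction via SIP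
        exfalso
        have hchain := hsp.1
        have hchain1 := hsp.2
        obtain ⟨C, hC⟩ : ∃ C, chainUp (SIdx.neg m) r = C ++ [iterSucc (SIdx.neg m) r] := by
          rcases r with _ | p
          · exact ⟨[], by simp [chainUp, iterSucc]⟩
          · exact ⟨chainUp (SIdx.neg m) p, chainUp_succ _ p⟩
        rw [hC] at hchain
        obtain ⟨L₁, L₂, hLeq, hCL⟩ := snoc_sublist_split hchain
        have hs : SIP ((u ++ L₁) ++ iterSucc (SIdx.neg m) r ::
            (L₂ ++ iterSucc (SIdx.neg m) r :: l)) := by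
          have heq : (u ++ L₁) ++ iterSucc (SIdx.neg m) r ::
              (L₂ ++ iterSucc (SIdx.neg m) r :: l)
              = u ++ (L₁ ++ iterSucc (SIdx.neg m) r :: L₂) ++ (SIdx.neg v :: l) := by
            rw [hbad]; simp
          rw [heq, ← hLeq]
          exact hSIP
        have hsmem := sip_between hs
        apply hchain1
        rw [chainUp_succ, hC, iterSucc_succ', hLeq]
        have h1 : C ++ [iterSucc (SIdx.neg m) r] <+ L₁ ++ [iterSucc (SIdx.neg m) r] :=
          hCL.append (List.Sublist.refl _)
        have h2 : [(iterSucc (SIdx.neg m) r).succ] <+ L₂ :=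
          List.singleton_sublist.mpr hsmem
        have h3 := h1.append h2
        simpa using h3
      · -- neutral case
        have hvne1 : v ≠ m - r - 1 := by
          intro hvv
          apply hext
          rw [iterSucc_neg (by omega : r + 1 ≤ m)]
          have hx : m - (r + 1) = v := by omega
          rw [hx]
        have hvne2 : v ≠ m - r := by
          intro hvv
          apply hbad
          rw [iterSucc_neg (by omega : r ≤ m)]
          have hx : m - r = v := by omega
          rw [hx]
        have hca : cA (SIdx.neg m) (L ++ [SIdx.neg v]) = r := by
          rw [cA_snoc_noextend hmem (by rw [hrdef]; exact hext), hrdef]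
        obtain ⟨ih1, ih2⟩ := ih Ys (L ++ [SIdx.neg v]) hlen' hcond' hSIP' hmem'
          (by rw [hca]; exact hlt)
        rw [hca] at ih1
        have hassoc : (L ++ [SIdx.neg v]) ++ l = L ++ SIdx.neg v :: l := by simp
        rw [hassoc] at ih1 ih2
        have hneu := rowSel_elemMat_neutral (m := m) (n := n) (SIdx.neg v) Y ⟨r, hlt⟩
          (by show r ≠ m - (SIdx.neg v).val - 1; simp only [SIdx.val]; omega)
          (by show r ≠ m - (SIdx.neg v).val; simp only [SIdx.val]; omega)
        have hneu' : rowSel m n ((r:ℤ)+1) * elemMat m n (SIdx.neg v) Y =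
            rowSel m n ((r:ℤ)+1) := hneu
        constructor
        · rw [prodAssign_cons, ← Matrix.mul_assoc, hneu']
          exact ih1
        · exact ih2


/-- Active phase for columns (multiplication by `M_{τ₁}(Y₁)` on the left). -/
lemma prod_tau_colSel (hm : 2 ≤ m) (post : List SIdx) :
    ∀ (l : List SIdx) (Ys : List (Matrix (Fin n) (Fin n) ℂ)) (L : List SIdx),
    l.length = Ys.length →
    (∀ k ∈ l, k.isNeg = true ∧ 2 ≤ k.val ∧ k.val ≤ m) →
    SIP (l ++ L ++ post) → SIdx.neg m ∈ L → iA (SIdx.neg m) L < m →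
    (prodAssign m n l Ys * colSel m n ((iA (SIdx.neg m) L : ℤ)+1) =
      colSel m n ((iA (SIdx.neg m) (l ++ L) : ℤ)+1)) ∧ iA (SIdx.neg m) (l ++ L) < m := by
  intro l
  induction l with
  | nil =>
    intro Ys L _ _ _ _ hlt
    rw [prodAssign_nil, Matrix.one_mul, List.nil_append]
    exact ⟨rfl, hlt⟩
  | cons k l ih =>
    rintro Ys L hlen hcond hSIP hmem hlt
    rcases Ys with _ | ⟨Y, Ys⟩
    · exact absurd hlen (by simp)
    obtain ⟨hneg, hval2, hvalm⟩ := hcond k (by simp)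
    obtain ⟨v, rfl⟩ : ∃ v, k = SIdx.neg v := by
      cases k with
      | pos j => simp [SIdx.isNeg] at hneg
      | neg j => exact ⟨j, rfl⟩
    simp only [SIdx.val] at hval2 hvalm
    have hSIPtail : SIP (l ++ L ++ post) := by
      apply sip_tail (x := SIdx.neg v)
      have heq : SIdx.neg v :: (l ++ L ++ post) = (SIdx.neg v :: l) ++ L ++ post := by simp
      rwa [heq]
    have hlen' : l.length = Ys.length := by simpa using hlen
    have hcond' : ∀ k' ∈ l, k'.isNeg = true ∧ 2 ≤ k'.val ∧ k'.val ≤ m :=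
      fun k' hk => hcond k' (by simp [hk])
    obtain ⟨ih1, ih2⟩ := ih Ys L hlen' hcond' hSIPtail hmem hlt
    obtain ⟨r, hrdef⟩ : ∃ r', iA (SIdx.neg m) (l ++ L) = r' := ⟨_, rfl⟩
    rw [hrdef] at ih1 ih2
    have hmem2 : SIdx.neg m ∈ l ++ L := List.mem_append_right _ hmem
    have hsp := iA_spec (t := SIdx.neg m) hmem2
    rw [hrdef] at hsp
    have hconsapp : (SIdx.neg v :: l) ++ L = SIdx.neg v :: (l ++ L) := by simp
    rw [hconsapp]
    by_cases hext : SIdx.neg v = iterSucc (SIdx.neg m) (r + 1)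
    · -- extension case
      have hvv : v = m - r - 1 := by
        rw [iterSucc_neg (by omega : r + 1 ≤ m)] at hext
        simp at hext; omega
      have hca : iA (SIdx.neg m) (SIdx.neg v :: (l ++ L)) = r + 1 := by
        rw [iA_cons_extend hmem2 (by rw [hrdef]; exact hext), hrdef]
      rw [hca]
      have hmove := elemMat_colSel_move (m := m) (n := n) v Y ⟨r, ih2⟩ (by omega) (by omega)
        (by omega) (by show r = m - v - 1; omega)
      have hmove' : elemMat m n (SIdx.neg v) Y * colSel m n ((r:ℤ)+1) =
          colSel m n ((r:ℤ)+2) := hmove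
      constructor
      · rw [prodAssign_cons, Matrix.mul_assoc, ih1, hmove']
        have hcast : (((r+1:ℕ):ℤ)+1) = ((r:ℤ)+2) := by push_cast; ring
        rw [hcast]
      · omega
    · by_cases hbad : SIdx.neg v = iterSucc (SIdx.neg m) r
      · -- contradiction via SIP
        exfalso
        have hchain := hsp.1
        have hchain1 := hsp.2
        obtain ⟨D, hD⟩ : ∃ D, (chainUp (SIdx.neg m) r).reverse
            = iterSucc (SIdx.neg m) r :: D := by
          rcases r with _ | p
          · exact ⟨[], by simp [chainUp, iterSucc]⟩
          · exact ⟨(chainUp (SIdx.neg m) p).reverse, revChain_succ _ p⟩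
        rw [hD] at hchain
        obtain ⟨L₁, L₂, hLeq, hDL⟩ := cons_sublist_split hchain
        have hs : SIP (([] : List SIdx) ++ iterSucc (SIdx.neg m) r ::
            (L₁ ++ iterSucc (SIdx.neg m) r :: (L₂ ++ post))) := by
          have heq : ([] : List SIdx) ++ iterSucc (SIdx.neg m) r ::
              (L₁ ++ iterSucc (SIdx.neg m) r :: (L₂ ++ post))
              = (SIdx.neg v :: l) ++ L ++ post := by
            rw [hbad]
            simp only [List.nil_append, List.cons_append, List.append_assoc]
            rw [← List.append_assoc l L post, hLeq]
            simp
          rw [heq]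
          exact hSIP
        have hsmem := sip_between hs
        apply hchain1
        rw [revChain_succ, iterSucc_succ', hD, hLeq]
        have h1 : [(iterSucc (SIdx.neg m) r).succ] <+ L₁ :=
          List.singleton_sublist.mpr hsmem
        have h2 : iterSucc (SIdx.neg m) r :: D <+ iterSucc (SIdx.neg m) r :: L₂ :=
          hDL.cons₂ _
        have h3 := h1.append h2
        simpa using h3
      · -- neutral case
        have hvne1 : v ≠ m - r - 1 := by
          intro hvv
          apply hext
          rw [iterSucc_neg (by omega : r + 1 ≤ m)]
          have hx : m - (r + 1) = v := by omega
          rw [hx]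
        have hvne2 : v ≠ m - r := by
          intro hvv
          apply hbad
          rw [iterSucc_neg (by omega : r ≤ m)]
          have hx : m - r = v := by omega
          rw [hx]
        have hca : iA (SIdx.neg m) (SIdx.neg v :: (l ++ L)) = r := by
          rw [iA_cons_noextend hmem2 (by rw [hrdef]; exact hext), hrdef]
        rw [hca]
        have hneu := elemMat_colSel_neutral (m := m) (n := n) (SIdx.neg v) Y ⟨r, ih2⟩
          (by show r ≠ m - (SIdx.neg v).val - 1; simp only [SIdx.val]; omega)
          (by show r ≠ m - (SIdx.neg v).val; simp only [SIdx.val]; omega)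
        have hneu' : elemMat m n (SIdx.neg v) Y * colSel m n ((r:ℤ)+1) =
            colSel m n ((r:ℤ)+1) := hneu
        constructor
        · rw [prodAssign_cons, Matrix.mul_assoc, ih1, hneu']
        · exact ih2

-- ============ bridging and bookkeeping ============

lemma consAt_eq_cA {α : List SIdx} {t : SIdx} (h : t ∈ α) : consAt α t = (cA t α : ℤ) := by
  rw [consAt, if_pos h]
  exact congrArg _ (fg_congr _ _)

lemma invsAt_eq_iA {α : List SIdx} {t : SIdx} (h : t ∈ α) : invsAt α t = (iA t α : ℤ) := by
  rw [invsAt, if_pos h]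
  exact congrArg _ (fg_congr _ _)

lemma sig_tau_disjoint (E : EGFPData m n) :
    (E.sig.map SIdx.val).Disjoint (E.tau.map SIdx.val) := by
  have hnd : ((E.sig.map SIdx.val) ++ (E.tau.map SIdx.val)).Nodup :=
    E.hperm.nodup_iff.mpr List.nodup_range
  exact (List.nodup_append'.mp hnd).2.2

lemma val_le_of_mem_tau (E : EGFPData m n) {k : SIdx} (h : k ∈ E.tau) : k.val ≤ m := by
  have h2 : k.val ∈ List.range (m + 1) :=
    E.hperm.subset (List.mem_append_right _ (List.mem_map_of_mem h))
  rw [List.mem_range] at h2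
  omega

lemma sig_exclusion (E : EGFPData m n) {i : ℕ} (hi : SIdx.pos i ∈ E.sig)
    (hi2 : SIdx.pos i ∈ E.sig2 ∨ SIdx.pos i ∈ E.sig1)
    (hsucc : (i+1) ∈ E.tau.map SIdx.val) : False := by
  obtain ⟨A₁, A₂, hA⟩ := List.append_of_mem hi
  have hdisj := sig_tau_disjoint E
  have key : (i+1) ∈ E.sig.map SIdx.val := by
    rcases hi2 with h2 | h2
    · obtain ⟨B₁, B₂, hB⟩ := List.append_of_mem h2
      have hs : SIP ((E.sig1 ++ A₁) ++ SIdx.pos i :: ((A₂ ++ B₁) ++ SIdx.pos i :: B₂)) := by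
        have heq : (E.sig1 ++ A₁) ++ SIdx.pos i :: ((A₂ ++ B₁) ++ SIdx.pos i :: B₂)
            = E.sig1 ++ E.sig ++ E.sig2 := by rw [hA, hB]; simp
        rw [heq]; exact E.hSIPsig
      have hmem := sip_between hs
      rw [show (SIdx.pos i).succ = SIdx.pos (i+1) from rfl] at hmem
      rcases List.mem_append.mp hmem with h | h
      · have hx : SIdx.pos (i+1) ∈ E.sig := by
          rw [hA]; exact List.mem_append_right _ (List.mem_cons_of_mem _ h)
        exact List.mem_map_of_mem hx
      · have hx : SIdx.pos (i+1) ∈ E.sig2 := by rw [hB]; exact List.mem_append_left _ h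
        exact List.mem_map_of_mem (E.hsig2 _ hx).1
    · obtain ⟨B₁, B₂, hB⟩ := List.append_of_mem h2
      have hs : SIP (B₁ ++ SIdx.pos i :: ((B₂ ++ A₁) ++ SIdx.pos i :: (A₂ ++ E.sig2))) := by
        have heq : B₁ ++ SIdx.pos i :: ((B₂ ++ A₁) ++ SIdx.pos i :: (A₂ ++ E.sig2))
            = E.sig1 ++ E.sig ++ E.sig2 := by rw [hA, hB]; simp
        rw [heq]; exact E.hSIPsig
      have hmem := sip_between hs
      rw [show (SIdx.pos i).succ = SIdx.pos (i+1) from rfl] at hmem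
      rcases List.mem_append.mp hmem with h | h
      · have hx : SIdx.pos (i+1) ∈ E.sig1 := by
          rw [hB]; exact List.mem_append_right _ (List.mem_cons_of_mem _ h)
        exact List.mem_map_of_mem (E.hsig1 _ hx).1
      · have hx : SIdx.pos (i+1) ∈ E.sig := by
          rw [hA]; exact List.mem_append_left _ h
        exact List.mem_map_of_mem hx
  exact hdisj key hsucc


end Stmt18


/-- **Lemma on row/column selection at `−m ∈ τ`.**
(a) If `c_{−m}(τ) < m` and `i_{−m}(τ) < m`, then
`(e^T_{c_{−m}(τ)+1} ⊗ I_n) M_{σ₂}(X₂) M_{τ₂}(Y₂) = e^T_{c_{−m}(τ,τ₂)+1} ⊗ I_n` and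
`M_{τ₁}(Y₁) M_{σ₁}(X₁) (e_{i_{−m}(τ)+1} ⊗ I_n) = e_{i_{−m}(τ₁,τ)+1} ⊗ I_n`.
(b) If `c_{−m}(τ) = m` then `(e^T_m ⊗ I_n) M_{σ₂}(X₂) M_{τ₂}(Y₂) = e^T_m ⊗ I_n`, and if
`i_{−m}(τ) = m` then `M_{τ₁}(Y₁) M_{σ₁}(X₁) (e_m ⊗ I_n) = e_m ⊗ I_n`. -/
theorem egfp_row_col_selection_at_neg_m {m n : ℕ} (E : EGFPData m n)
    (hτm : SIdx.neg m ∈ E.tau) :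
    (consAt E.tau (.neg m) < (m : ℤ) → invsAt E.tau (.neg m) < (m : ℤ) →
      rowSel m n (consAt E.tau (.neg m) + 1) *
          (prodAssign m n E.sig2 E.X2 * prodAssign m n E.tau2 E.Y2) =
        rowSel m n (consAt (E.tau ++ E.tau2) (.neg m) + 1) ∧
      (prodAssign m n E.tau1 E.Y1 * prodAssign m n E.sig1 E.X1) *
          colSel m n (invsAt E.tau (.neg m) + 1) =
        colSel m n (invsAt (E.tau1 ++ E.tau) (.neg m) + 1)) ∧
    (consAt E.tau (.neg m) = (m : ℤ) →
      rowSel m n (m : ℤ) * (prodAssign m n E.sig2 E.X2 * prodAssign m n E.tau2 E.Y2) =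
        rowSel m n (m : ℤ)) ∧
    (invsAt E.tau (.neg m) = (m : ℤ) →
      (prodAssign m n E.tau1 E.Y1 * prodAssign m n E.sig1 E.X1) * colSel m n (m : ℤ) =
        colSel m n (m : ℤ)) := by
  
  classical
  have hm2 := E.hm
  have hmem_tt2 : SIdx.neg m ∈ E.tau ++ E.tau2 := List.mem_append_left _ hτm
  have hmem_t1t : SIdx.neg m ∈ E.tau1 ++ E.tau := List.mem_append_right _ hτm
  have hcond2 : ∀ k ∈ E.tau2, k.isNeg = true ∧ 2 ≤ k.val ∧ k.val ≤ m := by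
    intro k hk
    obtain ⟨hkt, h2⟩ := E.htau2 k hk
    exact ⟨E.htauneg k hkt, h2, Stmt18.val_le_of_mem_tau E hkt⟩
  have hcond1 : ∀ k ∈ E.tau1, k.isNeg = true ∧ 2 ≤ k.val ∧ k.val ≤ m := by
    intro k hk
    obtain ⟨hkt, h2⟩ := E.htau1 k hk
    exact ⟨E.htauneg k hkt, h2, Stmt18.val_le_of_mem_tau E hkt⟩
  have hposval : ∀ k ∈ E.sig2 ++ E.sig1, ∃ i : ℕ, k = SIdx.pos i := by
    intro k hk
    have hks : k ∈ E.sig := by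
      rcases List.mem_append.mp hk with h | h
      · exact (E.hsig2 k h).1
      · exact (E.hsig1 k h).1
    cases k with
    | pos i => exact ⟨i, rfl⟩
    | neg i => exact absurd (E.hsigpos _ hks) (by simp [SIdx.isNeg])
  refine ⟨fun hc hi => ⟨?_, ?_⟩, fun hc => ?_, fun hi => ?_⟩
  · -- (a) rows
    rw [Stmt18.consAt_eq_cA hτm] at hc ⊢
    rw [Stmt18.consAt_eq_cA hmem_tt2]
    have hcm : Stmt18.cA (SIdx.neg m) E.tau < m := by exact_mod_cast hc
    have hchain := (Stmt18.cA_spec hτm).1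
    have hmc_tau : (m - Stmt18.cA (SIdx.neg m) E.tau) ∈ E.tau.map SIdx.val := by
      have hmm := hchain.subset (Stmt18.iterSucc_mem_chainUp (le_refl _))
      rw [Stmt18.iterSucc_neg (by omega)] at hmm
      exact List.mem_map_of_mem hmm
    have hneutral := Stmt18.rowSel_prod_neutral (m := m) (n := n)
      ⟨Stmt18.cA (SIdx.neg m) E.tau, hcm⟩ E.sig2 E.X2 (by
      intro k hk
      obtain ⟨i, rfl⟩ := hposval k (List.mem_append_left _ hk)
      obtain ⟨hks, hk2⟩ := E.hsig2 _ hk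
      simp only [SIdx.val] at hk2 ⊢
      have hine : i ≠ m - Stmt18.cA (SIdx.neg m) E.tau := by
        intro h
        exact Stmt18.sig_tau_disjoint E (List.mem_map_of_mem (f := SIdx.val) hks) (h ▸ hmc_tau)
      have hine2 : i ≠ m - Stmt18.cA (SIdx.neg m) E.tau - 1 := by
        intro h
        apply Stmt18.sig_exclusion E hks (Or.inl hk)
        have he : i + 1 = m - Stmt18.cA (SIdx.neg m) E.tau := by omega
        rw [he]
        exact hmc_tau
      constructor <;> (show Stmt18.cA (SIdx.neg m) E.tau ≠ _) <;> omega)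
    have hneutral' : rowSel m n ((Stmt18.cA (SIdx.neg m) E.tau : ℤ)+1) * prodAssign m n E.sig2 E.X2
        = rowSel m n ((Stmt18.cA (SIdx.neg m) E.tau : ℤ)+1) := hneutral
    have hphase := (Stmt18.rowSel_prod_tau hm2 E.tau1 E.tau2 E.Y2 E.tau E.hY2.1 hcond2
      E.hSIPtau hτm hcm).1
    rw [← Matrix.mul_assoc, hneutral', hphase]
  · -- (a) columns
    rw [Stmt18.invsAt_eq_iA hτm] at hi ⊢
    rw [Stmt18.invsAt_eq_iA hmem_t1t]
    have him : Stmt18.iA (SIdx.neg m) E.tau < m := by exact_mod_cast hi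
    have hchain := (Stmt18.iA_spec hτm).1
    have hmq_tau : (m - Stmt18.iA (SIdx.neg m) E.tau) ∈ E.tau.map SIdx.val := by
      have hmm := hchain.subset
        (by rw [List.mem_reverse]; exact Stmt18.iterSucc_mem_chainUp (le_refl _))
      rw [Stmt18.iterSucc_neg (by omega)] at hmm
      exact List.mem_map_of_mem hmm
    have hneutral := Stmt18.prod_colSel_neutral (m := m) (n := n)
      ⟨Stmt18.iA (SIdx.neg m) E.tau, him⟩ E.sig1 E.X1 (by
      intro k hk
      obtain ⟨i, rfl⟩ := hposval k (List.mem_append_right _ hk)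
      obtain ⟨hks, hk2⟩ := E.hsig1 _ hk
      simp only [SIdx.val] at hk2 ⊢
      have hine : i ≠ m - Stmt18.iA (SIdx.neg m) E.tau := by
        intro h
        exact Stmt18.sig_tau_disjoint E (List.mem_map_of_mem (f := SIdx.val) hks) (h ▸ hmq_tau)
      have hine2 : i ≠ m - Stmt18.iA (SIdx.neg m) E.tau - 1 := by
        intro h
        apply Stmt18.sig_exclusion E hks (Or.inr hk)
        have he : i + 1 = m - Stmt18.iA (SIdx.neg m) E.tau := by omega
        rw [he]
        exact hmq_tau
      constructor <;> (show Stmt18.iA (SIdx.neg m) E.tau ≠ _) <;> omega)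
    have hneutral' : prodAssign m n E.sig1 E.X1 * colSel m n ((Stmt18.iA (SIdx.neg m) E.tau : ℤ)+1)
        = colSel m n ((Stmt18.iA (SIdx.neg m) E.tau : ℤ)+1) := hneutral
    have hphase := (Stmt18.prod_tau_colSel hm2 E.tau2 E.tau1 E.Y1 E.tau E.hY1.1 hcond1
      E.hSIPtau hτm him).1
    rw [Matrix.mul_assoc, hneutral', hphase]
  · -- (b) rows
    have hceq : Stmt18.cA (SIdx.neg m) E.tau = m := by
      rw [Stmt18.consAt_eq_cA hτm] at hc; exact_mod_cast hc
    have hchain := (Stmt18.cA_spec hτm).1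
    rw [hceq] at hchain
    have h0tau : (0:ℕ) ∈ E.tau.map SIdx.val := by
      have hmm := hchain.subset (Stmt18.iterSucc_mem_chainUp (le_refl m))
      rw [Stmt18.iterSucc_neg (le_refl m)] at hmm
      have := List.mem_map_of_mem (f := SIdx.val) hmm
      simpa [SIdx.val] using this
    have h1tau : (1:ℕ) ∈ E.tau.map SIdx.val := by
      have hmm := hchain.subset (Stmt18.iterSucc_mem_chainUp (by omega : m - 1 ≤ m))
      rw [Stmt18.iterSucc_neg (by omega)] at hmm
      have h3 := List.mem_map_of_mem (f := SIdx.val) hmm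
      have he : SIdx.val (SIdx.neg (m - (m-1))) = 1 := by
        show m - (m - 1) = 1
        omega
      rwa [he] at h3
    have hidx : (m : ℤ) = ((m-1 : ℕ) : ℤ) + 1 := by omega
    rw [hidx, ← Matrix.mul_assoc]
    have h1 := Stmt18.rowSel_prod_neutral (m := m) (n := n) ⟨m-1, by omega⟩ E.sig2 E.X2 (by
      intro k hk
      obtain ⟨i, rfl⟩ := hposval k (List.mem_append_left _ hk)
      obtain ⟨hks, hk2⟩ := E.hsig2 _ hk
      simp only [SIdx.val] at hk2 ⊢
      have hi0 : i ≠ 0 := by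
        intro h
        exact Stmt18.sig_tau_disjoint E (List.mem_map_of_mem (f := SIdx.val) hks) (h ▸ h0tau)
      have hi1 : i ≠ 1 := by
        intro h
        exact Stmt18.sig_tau_disjoint E (List.mem_map_of_mem (f := SIdx.val) hks) (h ▸ h1tau)
      constructor <;> (show m - 1 ≠ _) <;> omega)
    have h2 := Stmt18.rowSel_prod_neutral (m := m) (n := n) ⟨m-1, by omega⟩ E.tau2 E.Y2 (by
      intro k hk
      obtain ⟨hneg, hv2, hvm⟩ := hcond2 k hk
      constructor <;> (show m - 1 ≠ _) <;> omega)
    have h1' : rowSel m n (((m-1:ℕ):ℤ)+1) * prodAssign m n E.sig2 E.X2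
        = rowSel m n (((m-1:ℕ):ℤ)+1) := h1
    have h2' : rowSel m n (((m-1:ℕ):ℤ)+1) * prodAssign m n E.tau2 E.Y2
        = rowSel m n (((m-1:ℕ):ℤ)+1) := h2
    rw [h1', h2']
  · -- (b) columns
    have hieq : Stmt18.iA (SIdx.neg m) E.tau = m := by
      rw [Stmt18.invsAt_eq_iA hτm] at hi; exact_mod_cast hi
    have hchain := (Stmt18.iA_spec hτm).1
    rw [hieq] at hchain
    have h0tau : (0:ℕ) ∈ E.tau.map SIdx.val := by
      have hmm := hchain.subset
        (by rw [List.mem_reverse]; exact Stmt18.iterSucc_mem_chainUp (le_refl m))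
      rw [Stmt18.iterSucc_neg (le_refl m)] at hmm
      have := List.mem_map_of_mem (f := SIdx.val) hmm
      simpa [SIdx.val] using this
    have h1tau : (1:ℕ) ∈ E.tau.map SIdx.val := by
      have hmm := hchain.subset
        (by rw [List.mem_reverse]; exact Stmt18.iterSucc_mem_chainUp (by omega : m - 1 ≤ m))
      rw [Stmt18.iterSucc_neg (by omega)] at hmm
      have h3 := List.mem_map_of_mem (f := SIdx.val) hmm
      have he : SIdx.val (SIdx.neg (m - (m-1))) = 1 := by
        show m - (m - 1) = 1
        omega
      rwa [he] at h3
    have hidx : (m : ℤ) = ((m-1 : ℕ) : ℤ) + 1 := by omega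
    rw [hidx, Matrix.mul_assoc]
    have h1 := Stmt18.prod_colSel_neutral (m := m) (n := n) ⟨m-1, by omega⟩ E.sig1 E.X1 (by
      intro k hk
      obtain ⟨i, rfl⟩ := hposval k (List.mem_append_right _ hk)
      obtain ⟨hks, hk2⟩ := E.hsig1 _ hk
      simp only [SIdx.val] at hk2 ⊢
      have hi0 : i ≠ 0 := by
        intro h
        exact Stmt18.sig_tau_disjoint E (List.mem_map_of_mem (f := SIdx.val) hks) (h ▸ h0tau)
      have hi1 : i ≠ 1 := by
        intro h
        exact Stmt18.sig_tau_disjoint E (List.mem_map_of_mem (f := SIdx.val) hks) (h ▸ h1tau)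
      constructor <;> (show m - 1 ≠ _) <;> omega)
    have h2 := Stmt18.prod_colSel_neutral (m := m) (n := n) ⟨m-1, by omega⟩ E.tau1 E.Y1 (by
      intro k hk
      obtain ⟨hneg, hv2, hvm⟩ := hcond1 k hk
      constructor <;> (show m - 1 ≠ _) <;> omega)
    have h1' : prodAssign m n E.sig1 E.X1 * colSel m n (((m-1:ℕ):ℤ)+1)
        = colSel m n (((m-1:ℕ):ℤ)+1) := h1
    have h2' : prodAssign m n E.tau1 E.Y1 * colSel m n (((m-1:ℕ):ℤ)+1)
        = colSel m n (((m-1:ℕ):ℤ)+1) := h2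
    rw [h1', h2']
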